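/- arXiv:2209.12405 — 5 statements merged into one kernel-verified Lean document; each statement's English description precedes it below -/
import Mathlib

section
/- PH(T) is a 0-rooted tree: for every node i ∈ {0, …, n} there is exactly one directed path in (V, E) from 0 to i; moreover, the label of this unique path (the concatenation of the Ψ-labels of its edges) equals h_i. -/
/-- `heapHList T i = [h_0, h_1, …, h_i]`: `h_0 = ε` and `h_i` is the shortest
prefix of `T[i:]` (the suffix of `T` starting at 1-indexed position `i`) not
among `h_0, …, h_{i-1}` (falling back to `T[i:]` itself if every prefix
already occurs there). -/
def heapHList {α : Type*} [DecidableEq α] (T : List α) : ℕ → List (List α)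
  | 0 => [[]]
  | i + 1 =>
    let prev := heapHList T i
    let suf := T.drop i
    prev ++ [(((List.range (suf.length + 1)).find?
        (fun k => decide (suf.take k ∉ prev))).elim suf fun k => suf.take k)]

/-- `heapH T i = h_i`. -/
def heapH {α : Type*} [DecidableEq α] (T : List α) (i : ℕ) : List α :=
  (heapHList T i).getD i []

/-- `T` ends with a letter that occurs nowhere else in `T`
(1-indexed: `T[i] ≠ T[n]` for all `1 ≤ i ≤ n - 1`). -/
def EndsUnique {α : Type*} (T : List α) : Prop :=
  ∀ i, i + 1 < T.length → T[i]? ≠ T[T.length - 1]?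

/-- `p` is a directed path (a list of consecutive arcs) from `a` to `b` in the
graph whose edge relation is `E`. -/
def IsArcPath {V : Type*} (E : V → V → Prop) : List (V × V) → V → V → Prop
  | [], a, b => a = b
  | e :: p, a, b => e.1 = a ∧ E e.1 e.2 ∧ IsArcPath E p e.2 b

/-- The edge relation of `PH(T)` on the nodes `{0, …, n}` (`n = |T|`):
`(i, j)` is an edge iff `h_i c = h_j` for some letter `c`. -/
def phEdge {α : Type*} [DecidableEq α] (T : List α) (i j : ℕ) : Prop :=
  i ≤ T.length ∧ j ≤ T.length ∧ ∃ c : α, heapH T i ++ [c] = heapH T j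

section Helpers
variable {α : Type*} [DecidableEq α] (T : List α)

lemma heapHList_length (i : ℕ) : (heapHList T i).length = i + 1 := by
  induction i with
  | zero => rfl
  | succ n ih => simp [heapHList, ih]

lemma heapH_succ (i : ℕ) :
    heapH T (i+1) = (((List.range ((T.drop i).length + 1)).find?
        (fun k => decide ((T.drop i).take k ∉ heapHList T i))).elim (T.drop i)
        fun k => (T.drop i).take k) := by
  have h : heapHList T (i+1) = heapHList T i ++ [(((List.range ((T.drop i).length + 1)).find?
        (fun k => decide ((T.drop i).take k ∉ heapHList T i))).elim (T.drop i)
        fun k => (T.drop i).take k)] := rfl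
  rw [heapH, List.getD_eq_getElem?_getD, h,
    List.getElem?_append_right (by rw [heapHList_length])]
  simp [heapHList_length]

lemma heapHList_succ (i : ℕ) :
    heapHList T (i+1) = heapHList T i ++ [heapH T (i+1)] := by
  rw [heapH_succ]; rfl

lemma heapH_zero : heapH T 0 = [] := rfl

lemma heapH_mem {j i : ℕ} (h : j ≤ i) : heapH T j ∈ heapHList T i := by
  induction i with
  | zero =>
    interval_cases j
    simp [heapHList, heapH_zero]
  | succ n ih =>
    rw [heapHList_succ]
    rcases Nat.lt_or_ge j (n+1) with hj | hj
    · exact List.mem_append_left _ (ih (by omega))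
    · have : j = n + 1 := by omega
      subst this; simp

lemma mem_heapHList {x : List α} {i : ℕ} (h : x ∈ heapHList T i) :
    ∃ j ≤ i, heapH T j = x := by
  induction i with
  | zero =>
    refine ⟨0, le_refl _, ?_⟩
    have hx : x = [] := by simpa [heapHList] using h
    simp [heapH_zero, hx]
  | succ n ih =>
    rw [heapHList_succ] at h
    rcases List.mem_append.mp h with h | h
    · obtain ⟨j, hj, hje⟩ := ih h
      exact ⟨j, by omega, hje⟩
    · exact ⟨n+1, le_refl _, (List.mem_singleton.mp h).symm⟩

lemma heapH_take (i : ℕ) : ∃ k ≤ (T.drop i).length, heapH T (i+1) = (T.drop i).take k := by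
  rw [heapH_succ]
  cases hfind : ((List.range ((T.drop i).length + 1)).find?
      (fun k => decide ((T.drop i).take k ∉ heapHList T i))) with
  | none => exact ⟨(T.drop i).length, le_refl _, by simp⟩
  | some k =>
    have hk : k ∈ List.range ((T.drop i).length + 1) := List.mem_of_find?_eq_some hfind
    exact ⟨k, by simpa using Nat.lt_succ_iff.mp (List.mem_range.mp hk), rfl⟩

lemma find?_append_some {β : Type*} {p : β → Bool} {l1 l2 : List β} {k : β}
    (h : l1.find? p = some k) : (l1++l2).find? p = some k := by
  induction l1 with
  | nil => simp at h
  | cons a l ih => by_cases hp : p a <;> simp_all [List.find?_cons]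

lemma find?_append_none {β : Type*} {p : β → Bool} {l1 l2 : List β}
    (h : l1.find? p = none) : (l1++l2).find? p = l2.find? p := by
  induction l1 with
  | nil => simp
  | cons a l ih => by_cases hp : p a <;> simp_all [List.find?_cons]

lemma find?_range_min {p : ℕ → Bool} {N k : ℕ} (h : (List.range N).find? p = some k) :
    p k = true ∧ ∀ j < k, p j = false := by
  induction N with
  | zero => simp at h
  | succ n ih =>
    rw [List.range_succ] at h
    cases hf : (List.range n).find? p with
    | some k' =>
      have := find?_append_some (l2 := [n]) hf
      rw [this] at h
      obtain rfl : k' = k := by injection h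
      exact ih hf
    | none =>
      rw [find?_append_none hf] at h
      have hall : ∀ j < n, p j = false := by
        intro j hj
        have := List.find?_eq_none.mp hf j (List.mem_range.mpr hj)
        simpa using this
      by_cases hp : p n
      · simp [List.find?_cons, hp] at h
        subst h
        exact ⟨hp, hall⟩
      · simp [List.find?_cons, hp] at h

variable (hu : EndsUnique T)
include hu

lemma suffix_not_mem {i : ℕ} (hi : i < T.length) : T.drop i ∉ heapHList T i := by
  intro hmem
  obtain ⟨j, hj, hje⟩ := mem_heapHList T hmem
  have hlen : (T.drop i).length = T.length - i := List.length_drop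
  cases j with
  | zero =>
    rw [heapH_zero] at hje
    have : (T.drop i).length = 0 := by rw [← hje]; rfl
    omega
  | succ j' =>
    obtain ⟨k, hk, hke⟩ := heapH_take T j'
    rw [hke] at hje
    -- (T.drop j').take k = T.drop i
    have hlen2 : k = T.length - i := by
      have := congrArg List.length hje
      simp [List.length_take, List.length_drop] at this
      omega
    have hlast : ((T.drop j').take k)[T.length - i - 1]? = T[j' + (T.length - i - 1)]? := by
      rw [List.getElem?_take_of_lt (by omega), List.getElem?_drop]
    have hlast2 : (T.drop i)[T.length - i - 1]? = T[i + (T.length - i - 1)]? :=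
      List.getElem?_drop
    rw [hje, hlast2] at hlast
    have hi2 : i + (T.length - i - 1) = T.length - 1 := by omega
    rw [hi2] at hlast
    have hju : j' + 1 ≤ i := hj
    have := hu (j' + (T.length - i - 1)) (by omega)
    exact this hlast.symm

lemma heapH_parent {i : ℕ} (hi : i < T.length) :
    heapH T (i+1) ≠ [] ∧ heapH T (i+1) ∉ heapHList T i ∧
    (heapH T (i+1)).dropLast ∈ heapHList T i := by
  have hsl : (T.drop i).length = T.length - i := List.length_drop
  have hm : ((T.drop i).take (T.drop i).length ∉ heapHList T i) := by
    rw [List.take_length]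
    exact suffix_not_mem T hu hi
  cases hfind : (List.range ((T.drop i).length + 1)).find?
      (fun k => decide ((T.drop i).take k ∉ heapHList T i)) with
  | none =>
    exfalso
    have := List.find?_eq_none.mp hfind (T.drop i).length
      (List.mem_range.mpr (by omega))
    simp only [decide_eq_true_eq] at this
    exact this hm
  | some k =>
    have hval : heapH T (i+1) = (T.drop i).take k := by
      rw [heapH_succ, hfind]
      rfl
    have hk : k < (T.drop i).length + 1 :=
      List.mem_range.mp (List.mem_of_find?_eq_some hfind)
    obtain ⟨hpk, hmin⟩ := find?_range_min hfind
    have hnotmem : (T.drop i).take k ∉ heapHList T i := by simpa using hpk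
    have hk0 : k ≠ 0 := by
      intro h0
      apply hnotmem
      rw [h0, List.take_zero]
      have := heapH_mem T (j := 0) (i := i) (by omega)
      rwa [heapH_zero] at this
    have hprev : (T.drop i).take (k-1) ∈ heapHList T i := by
      have := hmin (k-1) (by omega)
      simpa using this
    refine ⟨?_, by rwa [hval], ?_⟩
    · rw [hval]
      intro h
      have := congrArg List.length h
      simp [List.length_take] at this
      omega
    · rw [hval, List.dropLast_eq_take, List.take_take, List.length_take]
      have heq : min (min k (T.drop i).length - 1) k = k - 1 := by omega
      rw [heq]
      exact hprev

lemma heapH_inj {i j : ℕ} (hi : i ≤ T.length) (hj : j ≤ T.length)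
    (h : heapH T i = heapH T j) : i = j := by
  rcases Nat.lt_trichotomy i j with hlt | heq | hlt
  · exfalso
    obtain ⟨j', rfl⟩ : ∃ j', j = j' + 1 := ⟨j - 1, by omega⟩
    have hnm := (heapH_parent T hu (i := j') (by omega)).2.1
    exact hnm (h ▸ heapH_mem T (by omega : i ≤ j'))
  · exact heq
  · exfalso
    obtain ⟨i', rfl⟩ : ∃ i', i = i' + 1 := ⟨i - 1, by omega⟩
    have hnm := (heapH_parent T hu (i := i') (by omega)).2.1
    exact hnm (h ▸ heapH_mem T (by omega : j ≤ i'))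

end Helpers

section Path
variable {V : Type*} (E : V → V → Prop)

lemma isArcPath_snoc (p : List (V×V)) (e : V×V) (a b : V) :
    IsArcPath E (p ++ [e]) a b ↔ IsArcPath E p a e.1 ∧ E e.1 e.2 ∧ e.2 = b := by
  induction p generalizing a with
  | nil =>
    simp only [List.nil_append, IsArcPath]
    constructor
    · rintro ⟨h1, h2, h3⟩; exact ⟨h1.symm, h2, h3⟩
    · rintro ⟨h1, h2, h3⟩; exact ⟨h1.symm, h2, h3⟩
  | cons f q ih =>
    simp only [List.cons_append, IsArcPath, List.append_eq, ih, and_assoc]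

end Path

section Main
variable {α : Type*} [DecidableEq α] (T : List α) (hu : EndsUnique T)
include hu

lemma edge_parent {j j' i : ℕ} (e : phEdge T j i) (e' : phEdge T j' i) : j = j' := by
  obtain ⟨hj, hi, c, hc⟩ := e
  obtain ⟨hj', hi', c', hc'⟩ := e'
  have : heapH T j = heapH T j' := by
    have h := hc.trans hc'.symm
    exact (List.append_inj' h rfl).1
  exact heapH_inj T hu hj hj' this

omit hu in
lemma no_edge_zero {j : ℕ} : ¬ phEdge T j 0 := by
  rintro ⟨-, -, c, hc⟩
  rw [heapH_zero] at hc
  simpa using congrArg List.length hc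

lemma path_unique : ∀ (p : List (ℕ×ℕ)) (i : ℕ) (q : List (ℕ×ℕ)),
    IsArcPath (phEdge T) p 0 i → IsArcPath (phEdge T) q 0 i → p = q := by
  intro p
  induction p using List.reverseRecOn with
  | nil =>
    intro i q hp hq
    obtain rfl : (0 : ℕ) = i := hp
    cases q using List.reverseRecOn with
    | nil => rfl
    | append_singleton q' f =>
      obtain ⟨-, hf, hf2⟩ := (isArcPath_snoc _ q' f 0 0).mp hq
      exact absurd (hf2 ▸ hf) (no_edge_zero T)
  | append_singleton p' e ih =>
    intro i q hp hq
    obtain ⟨hp', he, rfl⟩ := (isArcPath_snoc _ p' e 0 i).mp hp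
    cases q using List.reverseRecOn with
    | nil =>
      have h0 : (0 : ℕ) = e.2 := hq
      rw [← h0] at he
      exact absurd he (no_edge_zero T)
    | append_singleton q' f =>
      obtain ⟨hq', hf, hf2⟩ := (isArcPath_snoc _ q' f 0 e.2).mp hq
      have h1 : e.1 = f.1 := edge_parent T hu he (hf2 ▸ hf)
      have := ih e.1 q' hp' (h1 ▸ hq')
      rw [this]
      rw [show e = f from Prod.ext h1 (hf2.symm : e.2 = f.2)]

lemma path_exists (Ψ : ℕ → ℕ → α)
    (hΨ : ∀ i j, phEdge T i j → heapH T i ++ [Ψ i j] = heapH T j) :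
    ∀ i ≤ T.length, ∃ p, IsArcPath (phEdge T) p 0 i ∧
      p.map (fun e => Ψ e.1 e.2) = heapH T i := by
  intro i
  induction i using Nat.strong_induction_on with
  | _ i ih =>
    intro hi
    match i, hi with
    | 0, _ => exact ⟨[], rfl, by rw [heapH_zero]; rfl⟩
    | j+1, hi =>
      obtain ⟨hne, -, hdrop⟩ := heapH_parent T hu (i := j) (by omega)
      obtain ⟨a, ha, hae⟩ := mem_heapHList T hdrop
      have hedge : phEdge T a (j+1) := by
        refine ⟨by omega, hi, (heapH T (j+1)).getLast hne, ?_⟩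
        rw [hae]
        exact List.dropLast_append_getLast hne
      obtain ⟨p, hp, hlab⟩ := ih a (by omega) (by omega)
      refine ⟨p ++ [(a, j+1)], ?_, ?_⟩
      · exact (isArcPath_snoc _ p (a, j+1) 0 (j+1)).mpr ⟨hp, hedge, rfl⟩
      · rw [List.map_append, hlab]
        simpa using hΨ a (j+1) hedge

end Main

/-- `PH(T)` is a `0`-rooted tree: for every node
`i ∈ {0, …, n}` there is exactly one directed path from `0` to `i`; moreover
for any labeling `Ψ` of the edges (where `Ψ i j = c` whenever `h_i c = h_j`),
the label of this unique path equals `h_i`. -/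
theorem statement1 {α : Type*} [DecidableEq α] (T : List α) (n : ℕ)
    (hn : n = T.length) (hpos : 1 ≤ n) (hu : EndsUnique T)
    (Ψ : ℕ → ℕ → α)
    (hΨ : ∀ i j, phEdge T i j → heapH T i ++ [Ψ i j] = heapH T j) :
    ∀ i ≤ n,
      (∃! p : List (ℕ × ℕ), IsArcPath (phEdge T) p 0 i) ∧
      (∀ p : List (ℕ × ℕ), IsArcPath (phEdge T) p 0 i →
        p.map (fun e => Ψ e.1 e.2) = heapH T i) := by
  intro i hi
  obtain ⟨p₀, hp₀, hlab₀⟩ := path_exists T hu Ψ hΨ i (by omega)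
  refine ⟨⟨p₀, hp₀, fun q hq => path_unique T hu q i p₀ hq hp₀⟩, fun p hp => ?_⟩
  rw [path_unique T hu p i p₀ hp hp₀]
  exact hlab₀
end

section
/- The map T ↦ PH(T) is injective: if T and T′ are strings over Σ, each of length n and each ending with a letter unique within itself, and PH(T) = PH(T′) (the same edge set E on the nodes {0, …, n} with the same labeling Ψ), then T = T′. -/
namespace S4Aux

theorem find?_range'_min {p : ℕ → Bool} : ∀ (len s k : ℕ),
    (List.range' s len).find? p = some k → ∀ j, s ≤ j → j < k → p j = false
  | 0, s, k, h => by simp at h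
  | len+1, s, k, h => by
    rw [List.range'_succ] at h
    intro j hsj hjk
    by_cases hp : p s = true
    · rw [List.find?_cons_of_pos hp] at h
      simp only [Option.some.injEq] at h
      omega
    · rw [List.find?_cons_of_neg hp] at h
      rcases eq_or_lt_of_le hsj with rfl | h'
      · simpa using hp
      · exact find?_range'_min len (s+1) k h j h' hjk

theorem find?_range_min {p : ℕ → Bool} {m k : ℕ}
    (h : (List.range m).find? p = some k) : ∀ j < k, p j = false := by
  rw [List.range_eq_range'] at h
  exact fun j hj => find?_range'_min m 0 k h j (Nat.zero_le _) hj

variable {α : Type*} [DecidableEq α] (T : List α)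

theorem length_heapHList (i : ℕ) : (heapHList T i).length = i + 1 := by
  induction i with
  | zero => rfl
  | succ i ih => simp [heapHList, ih]

theorem getD_append_singleton {β : Type*} (l : List β) (x d : β) :
    (l ++ [x]).getD l.length d = x := by
  simp [List.getD_eq_getElem?_getD, List.getElem?_append_right]

theorem heapH_succ (i : ℕ) : heapH T (i+1) =
    ((List.range ((T.drop i).length + 1)).find?
        (fun k => decide ((T.drop i).take k ∉ heapHList T i))).elim
      (T.drop i) (fun k => (T.drop i).take k) := by
  rw [heapH, heapHList]
  have := getD_append_singleton (heapHList T i)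
      (((List.range ((T.drop i).length + 1)).find?
        (fun k => decide ((T.drop i).take k ∉ heapHList T i))).elim
      (T.drop i) (fun k => (T.drop i).take k)) []
  rw [length_heapHList] at this
  exact this

theorem heapHList_succ (i : ℕ) :
    heapHList T (i+1) = heapHList T i ++ [heapH T (i+1)] := by
  rw [heapH_succ]; rfl

theorem heapH_zero : heapH T 0 = [] := rfl

theorem heapHList_eq_map (j : ℕ) :
    heapHList T j = (List.range (j+1)).map (heapH T) := by
  induction j with
  | zero => rfl
  | succ j ih =>
    rw [heapHList_succ, ih]
    simp [List.range_succ]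

theorem mem_heapHList {w : List α} {j : ℕ} :
    w ∈ heapHList T j ↔ ∃ i ≤ j, heapH T i = w := by
  simp [heapHList_eq_map, Nat.lt_succ_iff]

theorem heapH_prefix (i : ℕ) : heapH T (i+1) <+: T.drop i := by
  rw [heapH_succ]
  cases h : (List.range ((T.drop i).length + 1)).find?
      (fun k => decide ((T.drop i).take k ∉ heapHList T i)) with
  | none => exact List.prefix_rfl
  | some k => exact List.take_prefix k _

theorem drop_not_mem (hu : EndsUnique T) {j : ℕ} (hj : j < T.length) :
    T.drop j ∉ heapHList T j := by
  rw [mem_heapHList]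
  rintro ⟨i, hij, hi⟩
  match i, hi with
  | 0, hi =>
    rw [heapH_zero] at hi
    have := congrArg List.length hi
    simp at this
    omega
  | i'+1, hi =>
    have hp : T.drop j <+: T.drop i' := hi ▸ heapH_prefix T i'
    have hi'j : i' < j := by omega
    set m := T.length - j - 1 with hm
    have hl1 : (T.drop j).length = T.length - j := List.length_drop
    have hl2 : (T.drop i').length = T.length - i' := List.length_drop
    have hmlt : m < (T.drop j).length := by omega
    have hmlt' : m < (T.drop i').length := lt_of_lt_of_le hmlt hp.length_le
    have h1 : (T.drop j)[m] = T[j + m]'(by omega) := List.getElem_drop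
    have h2 : (T.drop i')[m] = T[i' + m]'(by omega) := List.getElem_drop
    have h3 := hp.getElem hmlt
    rw [h1, h2] at h3
    have h4 : T[i' + m]? = T[T.length - 1]? := by
      have e : T.length - 1 = j + m := by omega
      rw [List.getElem?_eq_getElem (show i' + m < T.length by omega),
        congrArg (fun x => T[x]?) e,
        List.getElem?_eq_getElem (show j + m < T.length by omega)]
      exact congrArg some h3.symm
    exact hu (i' + m) (by omega) h4

theorem key (hu : EndsUnique T) {j : ℕ} (hj : j < T.length) :
    ∃ k, 1 ≤ k ∧ k ≤ (T.drop j).length ∧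
      heapH T (j+1) = (T.drop j).take k ∧
      (T.drop j).take k ∉ heapHList T j ∧
      (T.drop j).take (k-1) ∈ heapHList T j := by
  set suf := T.drop j with hsuf
  set prev := heapHList T j with hprev
  set p : ℕ → Bool := fun k => decide (suf.take k ∉ prev) with hp
  have hsome : ((List.range (suf.length+1)).find? p).isSome := by
    rw [List.find?_isSome]
    refine ⟨suf.length, by simp, ?_⟩
    simp only [hp, List.take_length, decide_eq_true_eq]
    exact drop_not_mem T hu hj
  obtain ⟨k, hk⟩ := Option.isSome_iff_exists.mp hsome
  have hk_lt : k < suf.length + 1 := List.mem_range.mp (List.mem_of_find?_eq_some hk)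
  have hpk : suf.take k ∉ prev := by
    have := List.find?_some hk
    simpa [hp] using this
  have hmin : ∀ j' < k, suf.take j' ∈ prev := by
    intro j' hj'
    have := find?_range_min hk j' hj'
    simpa [hp] using this
  have hk1 : 1 ≤ k := by
    rcases Nat.eq_zero_or_pos k with rfl | h
    · exfalso
      apply hpk
      simp only [List.take_zero]
      rw [hprev, mem_heapHList]
      exact ⟨0, Nat.zero_le _, heapH_zero T⟩
    · exact h
  have hd : heapH T (j+1) = suf.take k := by
    rw [heapH_succ, ← hsuf, ← hprev, ← hp, hk]
    rfl
  exact ⟨k, hk1, by omega, hd, hpk, hmin (k-1) (by omega)⟩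

theorem heapH_ne_nil (hu : EndsUnique T) {j : ℕ} (hj : j < T.length) :
    heapH T (j+1) ≠ [] := by
  obtain ⟨k, hk1, hk2, hd, -, -⟩ := key T hu hj
  rw [hd]
  intro h
  have := congrArg List.length h
  simp at this
  omega

theorem dropLast_heapH_mem (hu : EndsUnique T) {j : ℕ} (hj : j < T.length) :
    (heapH T (j+1)).dropLast ∈ heapHList T j := by
  obtain ⟨k, hk1, hk2, hd, -, hmem⟩ := key T hu hj
  rw [hd, List.dropLast_eq_take, List.take_take, List.length_take]
  have : min k (T.drop j).length = k := by omega
  rw [this]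
  have : min (k-1) k = k - 1 := by omega
  rw [this]
  exact hmem

end S4Aux

/-- The map `T ↦ PH(T)` is injective: if `T` and `T'` both
have length `n ≥ 1`, both end with a unique letter, and their position heaps
coincide (same edges `(i, j)` with the same labels `c`, on nodes `{0, …, n}`),
then `T = T'`. -/
theorem statement4 {α : Type*} [DecidableEq α] (T T' : List α) (n : ℕ)
    (hn : n = T.length) (hn' : n = T'.length) (hpos : 1 ≤ n)
    (hu : EndsUnique T) (hu' : EndsUnique T')
    (hsame : ∀ i j, i ≤ n → j ≤ n → ∀ c : α,
      (heapH T i ++ [c] = heapH T j) ↔ (heapH T' i ++ [c] = heapH T' j)) :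
    T = T' := by
  have hcong : ∀ j, j ≤ n → heapH T j = heapH T' j := by
    intro j
    induction j using Nat.strong_induction_on with
    | _ j ih =>
      intro hjn
      match j with
      | 0 => rw [S4Aux.heapH_zero, S4Aux.heapH_zero]
      | m+1 =>
        have hm : m < T.length := by omega
        have hne := S4Aux.heapH_ne_nil T hu hm
        have hmem := S4Aux.dropLast_heapH_mem T hu hm
        rw [S4Aux.mem_heapHList] at hmem
        obtain ⟨i, him, hi⟩ := hmem
        set c := (heapH T (m+1)).getLast hne with hc
        have hedge : heapH T i ++ [c] = heapH T (m+1) := by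
          rw [hi, hc, List.dropLast_append_getLast]
        have hedge' : heapH T' i ++ [c] = heapH T' (m+1) :=
          (hsame i (m+1) (by omega) (by omega) c).mp hedge
        rw [← hedge', ← ih i (by omega) (by omega), hedge]
  apply List.ext_getElem (by omega)
  intro m h1 h2
  have hm : m < T.length := h1
  have hm' : m < T'.length := h2
  have hne := S4Aux.heapH_ne_nil T hu hm
  have hne' := S4Aux.heapH_ne_nil T' hu' hm'
  have hpre := S4Aux.heapH_prefix T m
  have hpre' := S4Aux.heapH_prefix T' m
  have h0 : 0 < (heapH T (m+1)).length := List.length_pos_iff.mpr hne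
  have h0' : 0 < (heapH T' (m+1)).length := List.length_pos_iff.mpr hne'
  have e1 : (heapH T (m+1))[0] = T[m] := by
    rw [hpre.getElem h0, List.getElem_drop]
    simp
  have e2 : (heapH T' (m+1))[0] = T'[m] := by
    rw [hpre'.getElem h0', List.getElem_drop]
    simp
  rw [← e1, ← e2]
  congr 1
  exact hcong (m+1) (by omega)
end

section
/- Suffix links are well-defined: for every i ∈ {1, …, n}, there exists exactly one j ∈ {0, …, n} such that h_i = c h_j for some letter c ∈ Σ (equivalently, the string h_i with its first letter removed occurs in the list h_0, …, h_n, and at exactly one index). -/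
namespace S5

variable {α : Type*} [DecidableEq α]

lemma hl_len (T : List α) (i : ℕ) : (heapHList T i).length = i + 1 := by
  induction i with
  | zero => rfl
  | succ i ih => simp [heapHList, ih]

lemma hl_prefix (T : List α) {i j : ℕ} (h : i ≤ j) : heapHList T i <+: heapHList T j := by
  induction j with
  | zero => simp_all
  | succ j ih =>
    rcases Nat.lt_or_ge i (j+1) with h' | h'
    · exact (ih (by omega)).trans ⟨_, rfl⟩
    · have : i = j + 1 := by omega
      subst this; exact List.prefix_rfl

lemma heapH_eq (T : List α) {i m : ℕ} (h : i ≤ m) :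
    heapH T i = (heapHList T m)[i]'(by rw [hl_len]; omega) := by
  have hp := hl_prefix T h
  have hi : i < (heapHList T i).length := by rw [hl_len]; omega
  rw [heapH, List.getD_eq_getElem _ _ hi, hp.getElem hi]

lemma mem_hl {T : List α} {i : ℕ} {x : List α} :
    x ∈ heapHList T i ↔ ∃ m, m ≤ i ∧ heapH T m = x := by
  rw [List.mem_iff_getElem]
  constructor
  · rintro ⟨m, hm, rfl⟩
    have hm' : m ≤ i := by rw [hl_len] at hm; omega
    exact ⟨m, hm', (heapH_eq T hm')⟩
  · rintro ⟨m, hm, rfl⟩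
    exact ⟨m, by rw [hl_len]; omega, (heapH_eq T hm).symm⟩

lemma nil_mem_hl (T : List α) (i : ℕ) : [] ∈ heapHList T i :=
  mem_hl.2 ⟨0, Nat.zero_le _, rfl⟩

lemma find?_range_spec {p : ℕ → Bool} {N k : ℕ} (h : (List.range N).find? p = some k) :
    p k = true ∧ k < N ∧ ∀ j < k, p j = false := by
  refine ⟨List.find?_some h, List.mem_range.1 (List.mem_of_find?_eq_some h), ?_⟩
  induction N with
  | zero => simp at h
  | succ N ih =>
    rw [List.range_succ, List.find?_append] at h
    intro j hj
    rcases h' : (List.range N).find? p with _ | k'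
    · rw [h', Option.none_or] at h
      simp at h
      obtain ⟨hpN, rfl⟩ := h
      rcases h'' : p j with _ | _
      · rfl
      · exfalso
        have := List.find?_eq_none.1 h' j (List.mem_range.2 hj)
        simp [h''] at this
    · simp only [h', Option.or] at h
      obtain rfl : k' = k := by injection h
      exact ih h' j hj

lemma find?_range_exists {p : ℕ → Bool} {N j : ℕ} (hj : j < N) (hp : p j = true) :
    ∃ k, (List.range N).find? p = some k := by
  rcases h : (List.range N).find? p with _ | k
  · exact absurd hp (by simpa using List.find?_eq_none.1 h j (List.mem_range.2 hj))
  · exact ⟨k, rfl⟩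


lemma shape (T : List α) : ∀ {m : ℕ} {x : List α}, x ∈ heapHList T m →
    x = [] ∨ ∃ j k, j < m ∧ 1 ≤ k ∧ k ≤ T.length - j ∧ x = (T.drop j).take k := by
  intro m
  induction m with
  | zero => intro x hx; left; simpa [heapHList] using hx
  | succ m ih =>
    intro x hx
    rw [heapHList, List.mem_append] at hx
    rcases hx with hx | hx
    · rcases ih hx with h | ⟨j, k, hj, hk⟩
      · exact Or.inl h
      · exact Or.inr ⟨j, k, by omega, hk⟩
    · simp only [List.mem_singleton] at hx
      subst hx
      rcases h : (List.range ((T.drop m).length + 1)).find?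
          (fun k => decide ((T.drop m).take k ∉ heapHList T m)) with _ | k
      · simp only [Option.elim]
        rcases Nat.eq_zero_or_pos (T.drop m).length with h0 | h0
        · left; simp [List.eq_nil_of_length_eq_zero h0]
        · right
          refine ⟨m, (T.drop m).length, by omega, h0, ?_, List.take_length.symm⟩
          simp only [List.length_drop]
          exact le_rfl
      · simp only [Option.elim]
        obtain ⟨hpk, hkN, -⟩ := find?_range_spec h
        rcases Nat.eq_zero_or_pos k with rfl | h0
        · left; simp
        · right
          exact ⟨m, k, by omega, h0, by simp at hkN ⊢; omega, rfl⟩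

lemma drop_not_mem (T : List α) (hu : EndsUnique T) {m : ℕ} (hm : m < T.length) :
    T.drop m ∉ heapHList T m := by
  intro hmem
  rcases shape T hmem with h | ⟨j, k, hj, hk1, hk2, heq⟩
  · have := congrArg List.length h
    simp at this; omega
  · have hlen := congrArg List.length heq
    simp [List.length_take, List.length_drop] at hlen
    set n := T.length with hn
    have hp : n - m - 1 < (T.drop m).length := by simp; omega
    have hp2 : n - m - 1 < ((T.drop j).take k).length := by
      simp [List.length_take]; omega
    have e1 : (T.drop m)[n - m - 1]'hp = T[n-1]'(by omega) := by
      rw [List.getElem_drop]; congr 1; omega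
    have e2 : ((T.drop j).take k)[n - m - 1]'hp2 = T[j + (n - m - 1)]'(by omega) := by
      rw [List.getElem_take, List.getElem_drop]
    have heq' : (T.drop m)[n - m - 1]'hp = ((T.drop j).take k)[n - m - 1]'hp2 :=
      List.getElem_of_eq heq _
    have : T[j + (n - m - 1)]'(by omega) = T[n-1]'(by omega) := by
      rw [← e1, ← e2, heq']
    have hne := hu (j + (n - m - 1)) (by omega)
    rw [List.getElem?_eq_getElem (by omega), List.getElem?_eq_getElem (by omega)] at hne
    exact hne (by rw [this])

lemma step (T : List α) (hu : EndsUnique T) {m : ℕ} (hm : m < T.length) :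
    ∃ k, 1 ≤ k ∧ k ≤ T.length - m ∧ heapH T (m+1) = (T.drop m).take k ∧
      heapH T (m+1) ∉ heapHList T m ∧
      ∀ j < k, (T.drop m).take j ∈ heapHList T m := by
  set prev := heapHList T m with hprev
  set suf := T.drop m with hsuf
  set p : ℕ → Bool := fun k => decide (suf.take k ∉ prev) with hp
  have hfull : p suf.length = true := by
    simp only [hp, List.take_length, decide_eq_true_eq]
    exact drop_not_mem T hu hm
  obtain ⟨k, hfind⟩ := find?_range_exists (Nat.lt_succ_self _) hfull
  obtain ⟨hpk, hkN, hmin⟩ := find?_range_spec hfind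
  have hk1 : 1 ≤ k := by
    rcases Nat.eq_zero_or_pos k with rfl | h; swap; · exact h
    simp only [hp, List.take_zero, decide_eq_true_eq] at hpk
    exact absurd (nil_mem_hl T m) (of_decide_eq_true hpk)
  have hH : heapH T (m+1) = suf.take k := by
    rw [heapH, heapHList]
    simp only [← hprev, ← hsuf, hfind, Option.elim]
    have hlen : prev.length = m + 1 := hl_len T m
    rw [List.getD_eq_getElem?_getD, List.getElem?_append_right (by omega)]
    simp [hlen]
    have hfind2 := hfind
    simp only [hp, decide_not, Nat.succ_eq_add_one] at hfind2
    simp only [hfind2]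
  refine ⟨k, hk1, ?_, hH, ?_, ?_⟩
  · have : suf.length = T.length - m := by simp [hsuf]
    omega
  · rw [hH]
    simpa [hp] using hpk
  · intro j hj
    have := hmin j hj
    simpa [hp] using this

lemma hl_succ (T : List α) (m : ℕ) :
    heapHList T (m+1) = heapHList T m ++ [heapH T (m+1)] := by
  conv_lhs => rw [heapHList]
  congr 1
  congr 1
  rw [heapH, heapHList]
  rw [List.getD_eq_getElem?_getD, List.getElem?_append_right ((hl_len T m).le)]
  simp [hl_len]

lemma hl_nodup (T : List α) (hu : EndsUnique T) : ∀ {m : ℕ}, m ≤ T.length →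
    (heapHList T m).Nodup := by
  intro m
  induction m with
  | zero => intro _; simp [heapHList]
  | succ m ih =>
    intro hm
    rw [hl_succ]
    obtain ⟨k, -, -, -, hnm, -⟩ := step T hu (show m < T.length by omega)
    refine List.nodup_append.2 ⟨ih (by omega), List.nodup_singleton _, ?_⟩
    intro x hx hx'' hx'
    rw [List.mem_singleton] at hx'
    subst hx'
    rintro rfl; exact hnm hx


lemma take_drop_cons (T : List α) {m k : ℕ} (hm : m < T.length) (hk : 1 ≤ k) :
    (T.drop m).take k = T[m] :: (T.drop (m+1)).take (k-1) := by
  rcases k with _ | k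
  · omega
  · rw [List.drop_eq_getElem_cons hm, List.take_succ_cons]
    rfl

lemma len_ge (T : List α) (hu : EndsUnique T) :
    ∀ m, m + 1 < T.length →
      (heapH T (m+1)).length ≤ (heapH T (m+2)).length + 1 := by
  intro m
  induction m using Nat.strong_induction_on with
  | _ m ih =>
  intro hmn
  by_contra hcon
  push_neg at hcon
  set n := T.length with hn
  obtain ⟨k, hk1, hk2, hkeq, hknm, hkmin⟩ := step T hu (show m < n by omega)
  obtain ⟨k', hk1', hk2', hkeq', hknm', hkmin'⟩ := step T hu (show m+1 < n by omega)
  have lenk : (heapH T (m+1)).length = k := by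
    rw [hkeq]; simp only [List.length_take, List.length_drop]; omega
  have lenk' : (heapH T (m+2)).length = k' := by
    rw [hkeq']; simp only [List.length_take, List.length_drop]; omega
  rw [lenk, lenk'] at hcon
  have hqmem : (T.drop m).take (k'+1) ∈ heapHList T m := hkmin _ (by omega)
  obtain ⟨mq, hmq, hq⟩ := mem_hl.1 hqmem
  have hq_cons : (T.drop m).take (k'+1)
      = T[m]'(by omega) :: (T.drop (m+1)).take k' := by
    rw [take_drop_cons T (by omega) (by omega)]
    norm_num
  have hmq1 : 1 ≤ mq := by
    rcases Nat.eq_zero_or_pos mq with rfl | h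
    · rw [show heapH T 0 = [] from rfl, hq_cons] at hq
      exact absurd hq.symm (List.cons_ne_nil _ _)
    · exact h
  obtain ⟨kq, hkq1, hkq2, hkqeq, hkqnm, hkqmin⟩ := step T hu (show mq - 1 < n by omega)
  have e1 : mq - 1 + 1 = mq := by omega
  rw [e1] at hkqeq hkqnm
  have lenq : kq = k' + 1 := by
    have l1 : (heapH T mq).length = kq := by
      rw [hkqeq]; simp only [List.length_take, List.length_drop]; omega
    have l2 : (heapH T mq).length = k' + 1 := by
      rw [hq]; simp only [List.length_take, List.length_drop]; omega
    omega
  have hq_cons2 : heapH T mq = T[mq-1]'(by omega) :: (T.drop mq).take k' := by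
    rw [hkqeq, lenq, take_drop_cons T (by omega) (by omega)]
    simp only [Nat.add_sub_cancel, e1]
  have key : (T.drop (m+1)).take k' = (T.drop mq).take k' := by
    have h2 := hq_cons2.symm.trans (hq.trans hq_cons)
    exact (List.cons_eq_cons.1 h2).2.symm
  have hkeq'' : heapH T (m+2) = (T.drop mq).take k' := by rw [hkeq', key]
  obtain ⟨k'', hk1'', hk2'', hkeq3, hknm3, hkmin3⟩ := step T hu (show mq < n by omega)
  have hlt : k'' < k' := by
    rcases lt_trichotomy k'' k' with h | h | h
    · exact h
    · exfalso
      have heq2 : heapH T (mq+1) = heapH T (m+2) := by rw [hkeq3, h, hkeq'']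
      have hmem : heapH T (mq+1) ∈ heapHList T (m+1) :=
        (hl_prefix T (show mq+1 ≤ m+1 by omega)).subset (mem_hl.2 ⟨mq+1, le_rfl, rfl⟩)
      rw [heq2] at hmem
      exact hknm' hmem
    · exfalso
      have hmem : (T.drop mq).take k' ∈ heapHList T (m+1) :=
        (hl_prefix T (show mq ≤ m+1 by omega)).subset (hkmin3 _ h)
      rw [← hkeq''] at hmem
      exact hknm' hmem
  have hih := ih (mq - 1) (by omega) (by omega)
  rw [e1, show mq - 1 + 2 = mq + 1 by omega] at hih
  have l1 : (heapH T mq).length = kq := by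
    rw [hkqeq]; simp only [List.length_take, List.length_drop]; omega
  have l3 : (heapH T (mq+1)).length = k'' := by
    rw [hkeq3]; simp only [List.length_take, List.length_drop]; omega
  omega

theorem statement5' (T : List α) (n : ℕ)
    (hn : n = T.length) (hpos : 1 ≤ n) (hu : EndsUnique T) :
    ∀ i, 1 ≤ i → i ≤ n →
      ∃! j : ℕ, j ≤ n ∧ ∃ c : α, heapH T i = c :: heapH T j := by
  subst hn
  intro i hi1 hin
  obtain ⟨k, hk1, hk2, hkeq, hknm, hkmin⟩ := step T hu (show i-1 < T.length by omega)
  have e1 : i - 1 + 1 = i := by omega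
  rw [e1] at hkeq hknm
  have hcons : heapH T i = T[i-1]'(by omega) :: (T.drop i).take (k-1) := by
    rw [hkeq, take_drop_cons T (by omega) hk1]
    simp only [e1]
  have hex : ∃ j, j ≤ T.length ∧ heapH T j = (T.drop i).take (k-1) := by
    rcases Nat.lt_or_ge i T.length with hilt | hige
    · obtain ⟨k', hk1', hk2', hkeq', hknm', hkmin'⟩ := step T hu hilt
      have hP := len_ge T hu (i-1) (by omega)
      rw [e1, show i-1+2 = i+1 by omega] at hP
      have l1 : (heapH T i).length = k := by
        rw [hkeq]; simp only [List.length_take, List.length_drop]; omega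
      have l2 : (heapH T (i+1)).length = k' := by
        rw [hkeq']; simp only [List.length_take, List.length_drop]; omega
      rcases Nat.lt_or_ge (k-1) k' with h | h
      · obtain ⟨j, hj, hje⟩ := mem_hl.1 (hkmin' _ h)
        exact ⟨j, by omega, hje⟩
      · have hkk : k - 1 = k' := by omega
        exact ⟨i+1, by omega, by rw [hkeq', hkk]⟩
    · have hk : k = 1 := by omega
      refine ⟨0, by omega, ?_⟩
      rw [hk]
      rfl
  obtain ⟨j₀, hj₀n, hj₀⟩ := hex
  refine ⟨j₀, ⟨hj₀n, T[i-1]'(by omega), by rw [hcons, hj₀]⟩, ?_⟩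
  rintro y ⟨hyn, c, hy⟩
  have heq : heapH T y = heapH T j₀ := by
    have h2 := hcons.symm.trans hy
    rw [(List.cons_eq_cons.1 h2).2.symm, hj₀]
  have hnod := hl_nodup T hu (le_refl T.length)
  rw [heapH_eq T hyn, heapH_eq T hj₀n] at heq
  exact (hnod.getElem_inj_iff).1 heq


end S5

/-- Suffix links are well-defined: for every `i ∈ {1, …, n}`
there is exactly one `j ∈ {0, …, n}` such that `h_i = c h_j` for some letter
`c`. -/
theorem statement5 {α : Type*} [DecidableEq α] (T : List α) (n : ℕ)
    (hn : n = T.length) (hpos : 1 ≤ n) (hu : EndsUnique T) :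
    ∀ i, 1 ≤ i → i ≤ n →
      ∃! j : ℕ, j ≤ n ∧ ∃ c : α, heapH T i = c :: heapH T j :=
  S5.statement5' T n hn hpos hu
end

section
/- If p and p′ are two distinct r-Eulerian cycles of the trace graph 𝒢(G) respecting S, then the strings obtained by concatenating the Ψ-labels of the tree-edge occurrences along p and along p′ (in order, ignoring suffix-link arcs) are distinct. Consequently, distinct legitimate cycles over a trace graph yield distinct source texts. -/
open scoped Classical

/-- `l` is the list of successive nodes (after the start) of a directed path
from `a` to `b` in the graph whose edge relation is `E`. -/
def IsPathOn {V : Type*} (E : V → V → Prop) : List V → V → V → Prop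
  | [], a, b => a = b
  | x :: l, a, b => E a x ∧ IsPathOn E l x b

/-- A walk through tagged arcs `(tail, head, tag)`, where the tag `true`
marks a suffix-link arc and `false` a tree edge. -/
def TaggedWalk {V : Type*} : List (V × V × Bool) → V → V → Prop
  | [], a, b => a = b
  | e :: p, a, b => e.1 = a ∧ TaggedWalk p e.2.1 b

/-- `p` is an `r`-Eulerian cycle of the trace graph `𝒢(G)` respecting the
suffix links `S`: it is a closed walk from `r` whose tree-edge arcs are
exactly the edges `e` with `σ(e) > 0`, each traversed `σ(e)` times, whose
suffix-link arcs are exactly `(u, S u)` for non-root `u`, each traversed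
once, and in which no tree edge with tail `u` occurs before the suffix-link
arc `(u, S u)`. -/
def IsEulerResp {V : Type*} [DecidableEq V] (E : V → V → Prop) (S : V → V)
    (sig : V → V → ℤ) (r : V) (p : List (V × V × Bool)) : Prop :=
  TaggedWalk p r r ∧
  (∀ u v : V, (u, v, false) ∈ p → E u v ∧ 0 < sig u v) ∧
  (∀ u v : V, E u v → 0 < sig u v → (p.count (u, v, false) : ℤ) = sig u v) ∧
  (∀ u v : V, (u, v, true) ∈ p → u ≠ r ∧ v = S u) ∧
  (∀ u : V, u ≠ r → p.count (u, S u, true) = 1) ∧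
  (∀ pre e post, p = pre ++ e :: post → e.2.2 = false → e.1 ≠ r →
    (e.1, S e.1, true) ∈ pre)

lemma taggedWalk_append {V : Type*} :
    ∀ (l1 l2 : List (V × V × Bool)) (a b : V),
      TaggedWalk (l1 ++ l2) a b → TaggedWalk l2 (l1.foldl (fun _ e => e.2.1) a) b := by
  intro l1
  induction l1 with
  | nil => intro l2 a b h; exact h
  | cons e l1 ih => intro l2 a b h; exact ih l2 e.2.1 b h.2

lemma euler_nil {V α : Type*} [DecidableEq V]
    (S : V → V) (r : V) (Ψ : V → V → α)
    (p p' : List (V × V × Bool))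
    (hcnt : ∀ u : V, u ≠ r → p.count (u, S u, true) = 1)
    (hcnt' : ∀ u : V, u ≠ r → p'.count (u, S u, true) = 1)
    (htag' : ∀ u v : V, (u, v, true) ∈ p' → u ≠ r ∧ v = S u)
    (hEq : (p.filter (fun e => !e.2.2)).map (fun e => Ψ e.1 e.2.1)
      = (p'.filter (fun e => !e.2.2)).map (fun e => Ψ e.1 e.2.1))
    (q' : List (V × V × Bool)) (h2 : p' = p ++ q') : q' = [] := by
  match q' with
  | [] => rfl
  | ⟨x, y, b⟩ :: t' =>
    exfalso
    cases b
    · -- false tag: contradicts length of label strings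
      have hlen : (p.filter (fun e => !e.2.2)).length
          = (p'.filter (fun e => !e.2.2)).length := by
        have := congrArg List.length hEq
        simpa using this
      rw [h2, List.filter_append] at hlen
      simp only [List.length_append] at hlen
      have : ((⟨x, y, false⟩ :: t' : List (V × V × Bool)).filter
          (fun e => !e.2.2)).length ≠ 0 := by
        simp
      omega
    · -- true tag
      have hmem : ((x, y, true) : V × V × Bool) ∈ p' := by
        rw [h2]; exact List.mem_append_right _ (List.mem_cons_self)
      obtain ⟨hxr, hy⟩ := htag' x y hmem
      subst hy
      have h1 := hcnt x hxr
      have h1' := hcnt' x hxr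
      rw [h2, List.count_append] at h1'
      have : 0 < ((⟨x, S x, true⟩ :: t' : List (V × V × Bool)).count (x, S x, true)) := by
        apply List.count_pos_iff.mpr
        exact List.mem_cons_self
      omega

lemma euler_ext {V α : Type*} [DecidableEq V] (E : V → V → Prop) (Ψ : V → V → α)
    (r : V)
    (hlab : ∀ u v w, E u v → E u w → Ψ u v = Ψ u w → v = w)
    (S : V → V) (sig : V → V → ℤ)
    (p p' : List (V × V × Bool))
    (hp : IsEulerResp E S sig r p) (hp' : IsEulerResp E S sig r p')
    (hEq : (p.filter (fun e => !e.2.2)).map (fun e => Ψ e.1 e.2.1)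
      = (p'.filter (fun e => !e.2.2)).map (fun e => Ψ e.1 e.2.1)) :
    ∀ q pre q', p = pre ++ q → p' = pre ++ q' → q = q' := by
  intro q
  induction q with
  | nil =>
      intro pre q' h1 h2
      rw [List.append_nil] at h1
      subst h1
      exact (euler_nil S r Ψ p p' hp.2.2.2.2.1 hp'.2.2.2.2.1 hp'.2.2.2.1 hEq q' h2).symm
  | cons e t ih =>
      intro pre q' h1 h2
      match q' with
      | [] =>
          exfalso
          rw [List.append_nil] at h2
          subst h2
          have := euler_nil S r Ψ p' p hp'.2.2.2.2.1 hp.2.2.2.2.1 hp.2.2.2.1 hEq.symm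
            (e :: t) h1
          simp at this
      | e' :: t' =>
          -- tails agree
          have hu : e.1 = pre.foldl (fun _ x => x.2.1) r :=
            (taggedWalk_append pre (e :: t) r r (h1 ▸ hp.1)).1
          have hu' : e'.1 = pre.foldl (fun _ x => x.2.1) r :=
            (taggedWalk_append pre (e' :: t') r r (h2 ▸ hp'.1)).1
          obtain ⟨x, v, b⟩ := e
          obtain ⟨x', v', b'⟩ := e'
          simp only at hu hu'
          rw [show x' = x from hu'.trans hu.symm] at h2
          have hmem : ((x, v, b) : V × V × Bool) ∈ p := by
            rw [h1]; exact List.mem_append_right _ (List.mem_cons_self)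
          have hmem' : ((x, v', b') : V × V × Bool) ∈ p' := by
            rw [h2]; exact List.mem_append_right _ (List.mem_cons_self)
          have key : v = v' ∧ b = b' := by
            cases b <;> cases b'
            · -- both tree edges
              have hE := hp.2.1 x v hmem
              have hE' := hp'.2.1 x v' hmem'
              have hfil :
                  (List.map (fun e => Ψ e.1 e.2.1) (pre.filter (fun e => !e.2.2)))
                    ++ Ψ x v :: (List.map (fun e => Ψ e.1 e.2.1) (t.filter (fun e => !e.2.2)))
                  = (List.map (fun e => Ψ e.1 e.2.1) (pre.filter (fun e => !e.2.2)))
                    ++ Ψ x v' :: (List.map (fun e => Ψ e.1 e.2.1) (t'.filter (fun e => !e.2.2))) := by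
                have := hEq
                rw [h1, h2] at this
                simpa [List.filter_append] using this
              have hΨ : Ψ x v = Ψ x v' :=
                (List.cons.injEq _ _ _ _ ▸ (List.append_cancel_left hfil)).1
              exact ⟨hlab x v v' hE.1 hE'.1 hΨ, rfl⟩
            · -- e tree edge, e' suffix link: contradiction
              exfalso
              obtain ⟨hxr, hv'⟩ := hp'.2.2.2.1 x v' hmem'
              subst hv'
              have hc' := hp'.2.2.2.2.1 x hxr
              rw [h2, List.count_append, List.count_cons_self] at hc'
              have hpre0 : pre.count (x, S x, true) = 0 := by omega
              have hmempre := hp.2.2.2.2.2 pre (x, v, false) t h1 rfl hxr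
              simp only at hmempre
              exact (List.count_eq_zero.mp hpre0) hmempre
            · -- e suffix link, e' tree edge: contradiction
              exfalso
              obtain ⟨hxr, hv⟩ := hp.2.2.2.1 x v hmem
              subst hv
              have hc := hp.2.2.2.2.1 x hxr
              rw [h1, List.count_append, List.count_cons_self] at hc
              have hpre0 : pre.count (x, S x, true) = 0 := by omega
              have hmempre := hp'.2.2.2.2.2 pre (x, v', false) t' h2 rfl hxr
              simp only at hmempre
              exact (List.count_eq_zero.mp hpre0) hmempre
            · -- both suffix links
              obtain ⟨_, hv⟩ := hp.2.2.2.1 x v hmem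
              obtain ⟨_, hv'⟩ := hp'.2.2.2.1 x v' hmem'
              exact ⟨hv.trans hv'.symm, rfl⟩
          obtain ⟨hv, hb⟩ := key
          subst hv; subst hb
          have ht : t = t' := by
            apply ih (pre ++ [(x, v, b)])
            · rw [h1]; simp
            · rw [h2]; simp
          rw [ht, show x' = x from hu'.trans hu.symm]

/-- If `p` and `p'` are two distinct `r`-Eulerian cycles of
the trace graph `𝒢(G)` respecting `S`, then the strings obtained by
concatenating the `Ψ`-labels of the tree-edge occurrences along `p` and
along `p'` (in order, ignoring suffix-link arcs) are distinct. -/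
theorem statement15 {V α : Type*} [Fintype V] [DecidableEq V]
    (E : V → V → Prop) (Ψ : V → V → α) (r : V)
    (htree : ∀ v : V, ∃! l : List V, IsPathOn E l r v)
    (hlab : ∀ u v w, E u v → E u w → Ψ u v = Ψ u w → v = w)
    (S : V → V)
    (hSroot : ∀ v, E r v → S v = r)
    (hSrec : ∀ u v, u ≠ r → E u v → E (S u) (S v) ∧ Ψ (S u) (S v) = Ψ u v)
    (sig : V → V → ℤ)
    (hsig : ∀ u v, E u v →
      sig u v = 1 - ((Finset.univ.filter (fun w => w ≠ r ∧ S w = v)).card : ℤ)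
        + ∑ w ∈ Finset.univ.filter (fun w => E v w), sig v w)
    (p p' : List (V × V × Bool))
    (hp : IsEulerResp E S sig r p) (hp' : IsEulerResp E S sig r p')
    (hne : p ≠ p') :
    (p.filter (fun e => !e.2.2)).map (fun e => Ψ e.1 e.2.1)
      ≠ (p'.filter (fun e => !e.2.2)).map (fun e => Ψ e.1 e.2.1) := by
  
  intro h
  exact hne (euler_ext E Ψ r hlab S sig p p' hp hp' h p [] p' (by simp) (by simp))
end

section
/- Let (V, E) be a rooted tree with V = {0, …, n} and root 0 such that PH(T) = (V, E, Ψ) for some string T over Σ ending with a unique letter and some labeling Ψ, and let d be the number of outgoing edges of the root 0. Then the number of strings T′ over Σ of length n, ending with a unique letter, such that PH(T′) = (V, E, Ψ′) for some labeling Ψ′, equals |Σ|! / (|Σ| − d)!. -/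
open scoped Classical



lemma find?_range_eq_some' {p : ℕ → Bool} {m k : ℕ}
    (h : (List.range m).find? p = some k) : p k ∧ ∀ j < k, ¬ p j := by
  induction m with
  | zero => simp [List.range_zero] at h
  | succ m ih =>
    rw [List.range_succ, List.find?_append] at h
    cases hf : (List.range m).find? p with
    | some k' =>
      rw [hf] at h; simp at h; subst h; exact ih hf
    | none =>
      rw [hf] at h; simp at h
      obtain ⟨rfl, hp⟩ : k = m ∧ p m := by
        cases h' : p m with
        | true => simp [List.find?, h'] at h; exact ⟨h.symm, rfl⟩
        | false => simp [List.find?, h'] at h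
      refine ⟨hp, fun j hj => ?_⟩
      have := List.find?_eq_none.mp hf j (List.mem_range.mpr hj)
      simpa using this

namespace PH
variable {α : Type*} [DecidableEq α] (T : List α)

def nextH (i : ℕ) : List α :=
  (((List.range ((T.drop i).length + 1)).find?
      (fun k => decide ((T.drop i).take k ∉ heapHList T i))).elim (T.drop i)
      fun k => (T.drop i).take k)

lemma heapHList_succ (i : ℕ) :
    heapHList T (i+1) = heapHList T i ++ [nextH T i] := rfl

lemma length_heapHList (i : ℕ) : (heapHList T i).length = i + 1 := by
  induction i with
  | zero => rfl
  | succ i ih => rw [heapHList_succ, List.length_append, ih]; rfl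

lemma heapH_zero : heapH T 0 = [] := rfl

lemma heapH_succ (i : ℕ) : heapH T (i+1) = nextH T i := by
  rw [heapH, heapHList_succ, List.getD_eq_getElem?_getD,
    List.getElem?_append_right (by rw [length_heapHList])]
  simp [length_heapHList]

lemma heapHList_prefix {i j : ℕ} (h : i ≤ j) : heapHList T i <+: heapHList T j := by
  induction j with
  | zero => simp_all
  | succ j ih =>
    rcases Nat.eq_or_lt_of_le h with rfl | h'
    · exact List.prefix_refl _
    · exact (ih (Nat.lt_succ_iff.mp h')).trans ⟨[nextH T j], (heapHList_succ T j).symm⟩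

lemma getElem_heapHList {i j : ℕ} (h : j ≤ i) (hj : j < (heapHList T i).length) :
    (heapHList T i)[j] = heapH T j := by
  have hp := heapHList_prefix T h
  have hlt : j < (heapHList T j).length := by rw [length_heapHList]; omega
  have := (hp.getElem hlt).symm
  rw [this, heapH, List.getD_eq_getElem?_getD, List.getElem?_eq_getElem hlt]
  rfl

lemma mem_heapHList_iff {l : List α} {i : ℕ} :
    l ∈ heapHList T i ↔ ∃ j ≤ i, heapH T j = l := by
  constructor
  · intro hl
    obtain ⟨j, hj, he⟩ := List.mem_iff_getElem.mp hl
    have hji : j ≤ i := by have := length_heapHList T i; omega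
    exact ⟨j, hji, by rw [← getElem_heapHList T hji hj, he]⟩
  · rintro ⟨j, hj, rfl⟩
    have hjl : j < (heapHList T i).length := by rw [length_heapHList]; omega
    rw [← getElem_heapHList T hj hjl]
    exact List.getElem_mem hjl

lemma nil_mem_heapHList (i : ℕ) : ([] : List α) ∈ heapHList T i :=
  (mem_heapHList_iff T).mpr ⟨0, Nat.zero_le _, rfl⟩

lemma heapH_succ_prefix (i : ℕ) : heapH T (i+1) <+: T.drop i := by
  rw [heapH_succ, nextH]
  cases h : (List.range ((T.drop i).length + 1)).find?
      (fun k => decide ((T.drop i).take k ∉ heapHList T i)) with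
  | none => exact List.prefix_refl _
  | some k => exact List.take_prefix _ _


lemma find?_congr {β : Type*} {p q : β → Bool} :
    ∀ (l : List β), (∀ x ∈ l, p x = q x) → l.find? p = l.find? q
  | [], _ => rfl
  | a :: l, h => by
    simp only [List.find?]
    rw [h a List.mem_cons_self]
    cases q a with
    | true => rfl
    | false => exact find?_congr l (fun x hx => h x (List.mem_cons_of_mem a hx))

lemma mem_T_of_mem_heapHList {l : List α} {i : ℕ} (h : l ∈ heapHList T i) :
    ∀ a ∈ l, a ∈ T := by
  obtain ⟨j, hj, rfl⟩ := (mem_heapHList_iff T).mp h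
  match j with
  | 0 => rw [heapH_zero]; simp
  | (j'+1) =>
    intro a ha
    exact (List.drop_sublist j' T).subset ((heapH_succ_prefix T j').subset ha)

section M
variable {f : α → α} (hf : ∀ a ∈ T, ∀ b ∈ T, f a = f b → a = b)
include hf

lemma map_inj_on {l1 l2 : List α} (h1 : ∀ a ∈ l1, a ∈ T) (h2 : ∀ a ∈ l2, a ∈ T)
    (h : l1.map f = l2.map f) : l1 = l2 := by
  induction l1 generalizing l2 with
  | nil => cases l2 <;> simp_all
  | cons a l ih =>
    cases l2 with
    | nil => simp at h
    | cons b l2 =>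
      simp only [List.map_cons, List.cons.injEq] at h
      have hab := hf a (h1 a (by simp)) b (h2 b (by simp)) h.1
      subst hab
      rw [ih (fun x hx => h1 x (by simp [hx])) (fun x hx => h2 x (by simp [hx])) h.2]

lemma heapHList_map (i : ℕ) :
    heapHList (T.map f) i = (heapHList T i).map (List.map f) := by
  induction i with
  | zero => rfl
  | succ i ih =>
    show heapHList (T.map f) i ++ _ = (heapHList T i ++ _).map (List.map f)
    rw [List.map_append, ih]
    congr 1
    have hsuf : (T.map f).drop i = (T.drop i).map f := List.map_drop.symm
    have hlen : ((T.map f).drop i).length = (T.drop i).length := by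
      rw [hsuf, List.length_map]
    rw [hsuf, List.length_map]
    have hcong : ∀ k ∈ List.range ((T.drop i).length + 1),
        (decide (((T.drop i).map f).take k ∉ (heapHList T i).map (List.map f))) =
        (decide ((T.drop i).take k ∉ heapHList T i)) := by
      intro k _
      rw [← List.map_take]
      apply decide_eq_decide.mpr
      constructor
      · intro hnm hm
        exact hnm (List.mem_map_of_mem (f := List.map f) hm)
      · intro hnm hm
        obtain ⟨l, hl, hle⟩ := List.mem_map.mp hm
        have : l = (T.drop i).take k := by
          refine map_inj_on T hf (mem_T_of_mem_heapHList T hl) ?_ hle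
          intro a ha
          exact (List.drop_sublist i T).subset ((List.take_prefix k _).subset ha)
        exact hnm (this ▸ hl)
    rw [find?_congr _ hcong]
    cases hfind : (List.range ((T.drop i).length + 1)).find?
        (fun k => decide ((T.drop i).take k ∉ heapHList T i)) with
    | none => simp
    | some k => simp [List.map_take]

lemma heapH_map (i : ℕ) : heapH (T.map f) i = (heapH T i).map f := by
  rw [heapH, heapH, heapHList_map T hf]
  have hi : i < (heapHList T i).length := by rw [length_heapHList]; omega
  rw [List.getD_eq_getElem?_getD, List.getD_eq_getElem?_getD,
    List.getElem?_map, List.getElem?_eq_getElem hi]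
  rfl

end M
lemma mem_T_of_mem_heapH {i : ℕ} : ∀ a ∈ heapH T i, a ∈ T :=
  mem_T_of_mem_heapHList T ((mem_heapHList_iff T).mpr ⟨i, le_refl i, rfl⟩)

section U
variable (hu : EndsUnique T)
include hu

lemma drop_not_mem {i : ℕ} (hi : i < T.length) : T.drop i ∉ heapHList T i := by
  intro hmem
  obtain ⟨j, hj, he⟩ := (mem_heapHList_iff T).mp hmem
  match j with
  | 0 =>
    rw [heapH_zero] at he
    have : (T.drop i).length = 0 := by rw [← he]; rfl
    rw [List.length_drop] at this; omega
  | (j'+1) =>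
    have hpre : T.drop i <+: T.drop j' := he ▸ heapH_succ_prefix T j'
    set n := T.length with hn
    have hk : n - i - 1 < (T.drop i).length := by rw [List.length_drop]; omega
    have h1 : (T.drop i)[n-i-1]? = T[n-1]? := by
      rw [List.getElem?_drop]; congr 1; omega
    have h2 : (T.drop j')[n-i-1]? = T[j' + (n-i-1)]? := by rw [List.getElem?_drop]
    have h3 : (T.drop i)[n-i-1]? = (T.drop j')[n-i-1]? := by
      rw [List.getElem?_eq_getElem hk,
        List.getElem?_eq_getElem (hpre.length_le.trans_lt' hk |>.trans_le le_rfl)]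
      exact congrArg some (hpre.getElem hk)
    have := hu (j' + (n-i-1)) (by omega)
    rw [h2.symm.trans (h3.symm.trans h1)] at this
    exact this rfl

lemma exists_find {i : ℕ} (hi : i < T.length) :
    ∃ k, (List.range ((T.drop i).length + 1)).find?
      (fun k => decide ((T.drop i).take k ∉ heapHList T i)) = some k := by
  rw [Option.isSome_iff_exists.symm]
  by_contra h
  rw [Option.not_isSome_iff_eq_none, List.find?_eq_none] at h
  have := h (T.drop i).length (List.mem_range.mpr (by omega))
  simp only [List.take_length, decide_eq_true_eq, not_not] at this
  exact drop_not_mem T hu hi this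

lemma heapH_spec {i : ℕ} (hi : i < T.length) :
    heapH T (i+1) ∉ heapHList T i ∧
    (∀ p, p <+: heapH T (i+1) → p ≠ heapH T (i+1) → p ∈ heapHList T i) := by
  obtain ⟨k, hk⟩ := exists_find T hu hi
  obtain ⟨hpk, hmin⟩ := find?_range_eq_some' hk
  have hkm : k < (T.drop i).length + 1 := by
    have := List.mem_of_find?_eq_some hk; exact List.mem_range.mp this
  have hval : heapH T (i+1) = (T.drop i).take k := by rw [heapH_succ T i]; unfold nextH; rw [hk]; rfl
  simp only [decide_eq_true_eq] at hpk
  constructor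
  · rw [hval]; exact hpk
  · intro p hp hne
    have hpp : p <+: T.drop i := hp.trans (heapH_succ_prefix T i)
    have hlen : p.length < k := by
      have h1 : p.length ≤ (heapH T (i+1)).length := hp.length_le
      have h2 : (heapH T (i+1)).length = min k (T.drop i).length := by
        rw [hval, List.length_take]
      rcases Nat.lt_or_ge p.length k with h | h
      · exact h
      · exfalso; apply hne
        have hpl : p.length = (heapH T (i+1)).length := by omega
        rw [List.prefix_iff_eq_take.mp hp, hpl, List.take_length]
    have := hmin p.length hlen
    simp only [decide_eq_true_eq, not_not] at this
    rwa [← List.prefix_iff_eq_take.mp hpp] at this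

lemma heapH_ne_nil {i : ℕ} (hi : i < T.length) : heapH T (i+1) ≠ [] := by
  intro h
  exact (heapH_spec T hu hi).1 (h ▸ nil_mem_heapHList T i)

lemma heapH_inj {i j : ℕ} (hij : i < j) (hj : j ≤ T.length) :
    heapH T i ≠ heapH T j := by
  intro h
  match j, hij with
  | (j'+1), hij =>
    apply (heapH_spec T hu (by omega : j' < T.length)).1
    rw [← h]
    exact (mem_heapHList_iff T).mpr ⟨i, by omega, rfl⟩

lemma head?_heapH {i : ℕ} (hi : i < T.length) :
    (heapH T (i+1)).head? = T[i]? := by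
  have hpre := heapH_succ_prefix T i
  have hne := heapH_ne_nil T hu hi
  have h0 : (heapH T (i+1))[0]? = (T.drop i)[0]? := by
    rw [List.getElem?_eq_getElem (List.length_pos_iff.mpr hne),
      List.getElem?_eq_getElem (by
        have := hpre.length_le
        have := List.length_pos_iff.mpr hne
        omega)]
    exact congrArg some (hpre.getElem (List.length_pos_iff.mpr hne))
  rw [← List.head?_eq_getElem?, List.getElem?_drop, Nat.add_zero] at h0
  exact h0

lemma heapH_eq_iff {i j : ℕ} (hi : i ≤ T.length) (hj : j ≤ T.length)
    (h : heapH T i = heapH T j) : i = j := by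
  rcases Nat.lt_trichotomy i j with h' | h' | h'
  · exact absurd h (heapH_inj T hu h' hj)
  · exact h'
  · exact absurd h.symm (heapH_inj T hu h' hi)

lemma exists_singleton {i : ℕ} (hi : i < T.length) :
    ∃ j, 1 ≤ j ∧ j ≤ T.length ∧ heapH T j = [T[i]] := by
  have hne := heapH_ne_nil T hu hi
  have hh := head?_heapH T hu hi
  obtain ⟨x, t, hxt⟩ : ∃ x t, heapH T (i+1) = x :: t := by
    cases hE : heapH T (i+1) with
    | nil => exact absurd hE hne
    | cons x t => exact ⟨x, t, rfl⟩
  have hx : x = T[i] := by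
    rw [hxt] at hh; rw [List.getElem?_eq_getElem hi] at hh
    simpa using hh
  cases t with
  | nil => exact ⟨i+1, by omega, by omega, by rw [hxt, hx]⟩
  | cons y t' =>
    have hpre : [x] <+: heapH T (i+1) := by rw [hxt]; exact ⟨y :: t', rfl⟩
    have hne2 : [x] ≠ heapH T (i+1) := by rw [hxt]; simp
    have hmem := (heapH_spec T hu hi).2 [x] hpre hne2
    obtain ⟨j, hj, hje⟩ := (mem_heapHList_iff T).mp hmem
    match j, hj with
    | 0, _ => rw [heapH_zero] at hje; simp at hje
    | (j'+1), hj => exact ⟨j'+1, by omega, by omega, by rw [hje, hx]⟩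

lemma endsUnique_map {f : α → α} (hf : ∀ a ∈ T, ∀ b ∈ T, f a = f b → a = b) :
    EndsUnique (T.map f) := by
  intro i hlen
  rw [List.length_map] at hlen ⊢
  rw [List.getElem?_map, List.getElem?_map]
  intro hcon
  have hi : i < T.length := by omega
  have hl : T.length - 1 < T.length := by omega
  rw [List.getElem?_eq_getElem hi, List.getElem?_eq_getElem hl] at hcon
  simp only [Option.map_some] at hcon
  have heq := hf _ (List.getElem_mem hi) _ (List.getElem_mem hl)
    (Option.some.inj hcon)
  apply hu i hlen
  rw [List.getElem?_eq_getElem hi, List.getElem?_eq_getElem hl, heq]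

lemma edge_iff_map {f : α → α} (hf : ∀ a ∈ T, ∀ b ∈ T, f a = f b → a = b)
    {i j : ℕ} (hi : i ≤ T.length) (hj : j ≤ T.length) :
    (∃ c, heapH (T.map f) i ++ [c] = heapH (T.map f) j) ↔
      (∃ c, heapH T i ++ [c] = heapH T j) := by
  rw [heapH_map T hf i, heapH_map T hf j]
  constructor
  · rintro ⟨c, hc⟩
    match j, hj with
    | 0, _ => rw [heapH_zero] at hc; simp at hc
    | (j'+1), hj =>
      have hne : heapH T (j'+1) ≠ [] := heapH_ne_nil T hu (by omega)
      refine ⟨(heapH T (j'+1)).getLast hne, ?_⟩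
      have hsplit := List.dropLast_append_getLast hne
      have hc2 : (heapH T i).map f ++ [c] =
          ((heapH T (j'+1)).dropLast).map f ++ [f ((heapH T (j'+1)).getLast hne)] := by
        rw [← hsplit] at hc; simpa [List.map_append] using hc
      have hlen : ((heapH T i).map f).length =
          (((heapH T (j'+1)).dropLast).map f).length := by
        have h3 := congrArg List.length hc2
        simp only [List.length_append, List.length_map, List.length_cons,
          List.length_nil] at h3
        simp only [List.length_map]; omega
      obtain ⟨h1, _⟩ := List.append_inj hc2 hlen
      have h2 : heapH T i = (heapH T (j'+1)).dropLast := by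
        refine map_inj_on T hf (mem_T_of_mem_heapH T) ?_ h1
        intro a ha
        exact mem_T_of_mem_heapH T a ((List.dropLast_prefix _).subset ha)
      rw [h2, hsplit]
  · rintro ⟨c, hc⟩
    exact ⟨f c, by rw [← hc]; simp⟩


lemma filter_card :
    ((Finset.Icc 0 T.length).filter
      (fun j => ∃ c : α, heapH T 0 ++ [c] = heapH T j)).card = T.toFinset.card := by
  symm
  have hex : ∀ a ∈ T.toFinset, ∃ j, 1 ≤ j ∧ j ≤ T.length ∧ heapH T j = [a] := by
    intro a ha
    obtain ⟨i, hi, rfl⟩ := List.mem_iff_getElem.mp (List.mem_toFinset.mp ha)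
    exact exists_singleton T hu hi
  refine Finset.card_bij (fun a ha => (hex a ha).choose) ?_ ?_ ?_
  · intro a ha
    obtain ⟨h1, h2, h3⟩ := (hex a ha).choose_spec
    refine Finset.mem_filter.mpr ⟨Finset.mem_Icc.mpr ⟨Nat.zero_le _, h2⟩, ⟨a, ?_⟩⟩
    rw [heapH_zero T, h3]; rfl
  · intro a ha b hb h
    have h' : (hex a ha).choose = (hex b hb).choose := h
    have h3a := (hex a ha).choose_spec.2.2
    have h3b := (hex b hb).choose_spec.2.2
    rw [h', h3b] at h3a
    simpa using h3a.symm
  · intro b hb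
    obtain ⟨hb1, c, hc⟩ := Finset.mem_filter.mp hb
    have hble := (Finset.mem_Icc.mp hb1).2
    rw [heapH_zero T] at hc
    simp only [List.nil_append] at hc
    match b, hble with
    | 0, _ => rw [heapH_zero T] at hc; simp at hc
    | (b'+1), hble =>
      have hb' : b' < T.length := by omega
      have hcv : c = T[b'] := by
        have h1 := head?_heapH T hu hb'
        rw [← hc, List.head?_cons, List.getElem?_eq_getElem hb'] at h1
        simpa using h1
      have hmem : c ∈ T.toFinset := by
        rw [hcv]; exact List.mem_toFinset.mpr (List.getElem_mem hb')
      refine ⟨c, hmem, ?_⟩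
      obtain ⟨g1, g2, g3⟩ := (hex c hmem).choose_spec
      exact heapH_eq_iff T hu g2 (by omega) (by rw [g3, hc])

end U
section V

def extFun (e : {x // x ∈ T.toFinset} ↪ α) : α → α :=
  fun a => if h : a ∈ T.toFinset then e ⟨a, h⟩ else a

def Phi (e : {x // x ∈ T.toFinset} ↪ α) : List α := T.map (extFun T e)

lemma extFun_apply (e : {x // x ∈ T.toFinset} ↪ α) {a : α} (ha : a ∈ T) :
    extFun T e a = e ⟨a, List.mem_toFinset.mpr ha⟩ := dif_pos _

lemma extFun_injOn (e : {x // x ∈ T.toFinset} ↪ α) :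
    ∀ a ∈ T, ∀ b ∈ T, extFun T e a = extFun T e b → a = b := by
  intro a ha b hb h
  rw [extFun_apply T e ha, extFun_apply T e hb] at h
  exact congrArg Subtype.val (e.injective h)

lemma length_Phi (e : {x // x ∈ T.toFinset} ↪ α) : (Phi T e).length = T.length :=
  List.length_map _

lemma Phi_injective : Function.Injective (Phi T) := by
  intro e1 e2 h
  apply Function.Embedding.ext
  rintro ⟨a, haf⟩
  have ha := List.mem_toFinset.mp haf
  obtain ⟨i, hi, rfl⟩ := List.mem_iff_getElem.mp ha
  have h2 := congrArg (fun l => l[i]?) h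
  simp only [Phi, List.getElem?_map, List.getElem?_eq_getElem hi,
    Option.map_some] at h2
  have h3 := Option.some.inj h2
  rw [extFun_apply T e1 (List.getElem_mem hi),
    extFun_apply T e2 (List.getElem_mem hi)] at h3
  exact h3

lemma exists_phi_eq (hu : EndsUnique T) (T' : List α)
    (hlen : T'.length = T.length) (hu' : EndsUnique T')
    (hedge : ∀ i j, i ≤ T.length → j ≤ T.length →
      ((∃ c, heapH T' i ++ [c] = heapH T' j) ↔ (∃ c, heapH T i ++ [c] = heapH T j))) :
    ∃ e, Phi T e = T' := by
  classical
  have hJ : ∀ a : {x // x ∈ T.toFinset},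
      ∃ j, 1 ≤ j ∧ j ≤ T.length ∧ heapH T j = [a.1] := by
    rintro ⟨a, haf⟩
    obtain ⟨i, hi, rfl⟩ := List.mem_iff_getElem.mp (List.mem_toFinset.mp haf)
    exact exists_singleton T hu hi
  have hC : ∀ a, ∃ c, heapH T' ((hJ a).choose) = [c] := by
    intro a
    obtain ⟨h1, h2, h3⟩ := (hJ a).choose_spec
    obtain ⟨c, hc⟩ := (hedge 0 (hJ a).choose (by omega) h2).mpr
      ⟨a.1, by rw [heapH_zero T, h3]; rfl⟩
    exact ⟨c, by rw [← hc, heapH_zero T']; rfl⟩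
  have hCinj : Function.Injective (fun a => (hC a).choose) := by
    intro a b h
    simp only at h
    have hjj : (hJ a).choose = (hJ b).choose := by
      apply heapH_eq_iff T' hu'
        (by rw [hlen]; exact (hJ a).choose_spec.2.1)
        (by rw [hlen]; exact (hJ b).choose_spec.2.1)
      rw [(hC a).choose_spec, (hC b).choose_spec, h]
    have hs : ([a.1] : List α) = [b.1] := by
      rw [← (hJ a).choose_spec.2.2, ← (hJ b).choose_spec.2.2, hjj]
    exact Subtype.ext (by simpa using hs)
  refine ⟨⟨fun a => (hC a).choose, hCinj⟩, ?_⟩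
  set e : {x // x ∈ T.toFinset} ↪ α := ⟨fun a => (hC a).choose, hCinj⟩ with he
  have key : ∀ i, i < T.length →
      heapH T' (i+1) ≠ [] ∧ (heapH T' (i+1)).head? = (T[i]?).map (extFun T e) := by
    intro i
    induction i using Nat.strong_induction_on with
    | _ i IH =>
      intro hi
      have hne := heapH_ne_nil T hu hi
      have hh := head?_heapH T hu hi
      by_cases hlen1 : (heapH T (i+1)).length = 1
      · obtain ⟨x, hx⟩ := List.length_eq_one_iff.mp hlen1
        have hxv : x = T[i] := by
          rw [hx, List.getElem?_eq_getElem hi] at hh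
          simpa using hh
        subst hxv
        have hmemT : T[i] ∈ T.toFinset := List.mem_toFinset.mpr (List.getElem_mem hi)
        have hja : (hJ ⟨T[i], hmemT⟩).choose = i + 1 :=
          heapH_eq_iff T hu (hJ ⟨T[i], hmemT⟩).choose_spec.2.1 (by omega)
            (by rw [(hJ ⟨T[i], hmemT⟩).choose_spec.2.2, hx])
        have hCval : heapH T' ((hJ ⟨T[i], hmemT⟩).choose) = [e ⟨T[i], hmemT⟩] :=
          (hC ⟨T[i], hmemT⟩).choose_spec
        simp only [hja] at hCval
        refine ⟨by rw [hCval]; simp, ?_⟩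
        rw [hCval, List.getElem?_eq_getElem hi]
        simp only [Option.map_some, List.head?_cons]
        rw [extFun_apply T e (List.getElem_mem hi)]
      · have hlen2 : 2 ≤ (heapH T (i+1)).length := by
          have h0 : (heapH T (i+1)).length ≠ 0 := by
            simpa [List.length_eq_zero_iff] using hne
          omega
        have hp : (heapH T (i+1)).dropLast <+: heapH T (i+1) := List.dropLast_prefix _
        have hpne : (heapH T (i+1)).dropLast ≠ heapH T (i+1) := by
          intro h
          have := congrArg List.length h
          rw [List.length_dropLast] at this; omega
        obtain ⟨j, hjle, hje⟩ := (mem_heapHList_iff T).mp ((heapH_spec T hu hi).2 _ hp hpne)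
        match j, hjle with
        | 0, _ =>
          rw [heapH_zero T] at hje
          have hc := congrArg List.length hje
          rw [List.length_dropLast] at hc
          simp only [List.length_nil] at hc; omega
        | (j'+1), hjle =>
          have hj' : j' < T.length := by omega
          have hedgeT : ∃ c, heapH T (j'+1) ++ [c] = heapH T (i+1) :=
            ⟨(heapH T (i+1)).getLast hne, by
              rw [hje]; exact List.dropLast_append_getLast hne⟩
          obtain ⟨c', hc'⟩ := (hedge (j'+1) (i+1) (by omega) (by omega)).mpr hedgeT
          obtain ⟨hne', hhd'⟩ := IH j' (by omega) hj'
          have hj'i : T[j']? = T[i]? := by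
            have h1 := head?_heapH T hu hj'
            rw [hje, List.head?_eq_getElem?, List.getElem?_dropLast,
              if_pos (by omega), ← List.head?_eq_getElem?, hh] at h1
            exact h1.symm
          refine ⟨by rw [← hc']; simp, ?_⟩
          rw [← hc', List.head?_append]
          cases hcase : (heapH T' (j'+1)).head? with
          | none => exact absurd (List.head?_eq_none_iff.mp hcase) hne'
          | some y =>
            rw [hcase] at hhd'
            rw [Option.some_or, ← hj'i]
            exact hhd'
  apply List.ext_getElem?
  intro i
  by_cases hi : i < T.length
  · have hkey := (key i hi).2
    have h1 : T'[i]? = (heapH T' (i+1)).head? :=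
      (head?_heapH T' hu' (by omega)).symm
    rw [Phi, List.getElem?_map, h1, hkey]
  · have h2 : T.length ≤ i := by omega
    rw [List.getElem?_eq_none (by rw [length_Phi]; omega),
      List.getElem?_eq_none (by omega)]

end V
end PH

/-- Let `T` (length `n`, ending with a unique letter) be a
string whose position heap realizes a given rooted tree shape on `{0, …, n}`,
and let `d` be the number of outgoing edges of the root `0`. Then the number
of strings `T'` over `α` of length `n`, ending with a unique letter, whose
position heap has the same edge set (for some labeling), equals
`|α|! / (|α| − d)!`. -/
theorem statement19 {α : Type*} [Fintype α] [DecidableEq α]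
    (T : List α) (n : ℕ) (hn : n = T.length) (hpos : 1 ≤ n)
    (hu : EndsUnique T) (d : ℕ)
    (hd : d = ((Finset.Icc 0 n).filter
      (fun j => ∃ c : α, heapH T 0 ++ [c] = heapH T j)).card) :
    {T' : List α | T'.length = n ∧ EndsUnique T' ∧
        ∀ i j, i ≤ n → j ≤ n →
          ((∃ c : α, heapH T' i ++ [c] = heapH T' j) ↔
            (∃ c : α, heapH T i ++ [c] = heapH T j))}.ncard
      = (Fintype.card α).factorial / (Fintype.card α - d).factorial := by
  subst hn
  have hset : {T' : List α | T'.length = T.length ∧ EndsUnique T' ∧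
        ∀ i j, i ≤ T.length → j ≤ T.length →
          ((∃ c : α, heapH T' i ++ [c] = heapH T' j) ↔
            (∃ c : α, heapH T i ++ [c] = heapH T j))} = Set.range (PH.Phi T) := by
    ext T'
    simp only [Set.mem_setOf_eq, Set.mem_range]
    constructor
    · rintro ⟨h1, h2, h3⟩
      obtain ⟨e, he⟩ := PH.exists_phi_eq T hu T' h1 h2 h3
      exact ⟨e, he⟩
    · rintro ⟨e, rfl⟩
      exact ⟨PH.length_Phi T e, PH.endsUnique_map T hu (PH.extFun_injOn T e),
        fun i j hi hj => PH.edge_iff_map T hu (PH.extFun_injOn T e) hi hj⟩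
  rw [hset, ← Nat.card_coe_set_eq,
    Nat.card_range_of_injective (PH.Phi_injective T), Nat.card_eq_fintype_card,
    Fintype.card_embedding_eq, Fintype.card_coe]
  have hdcard : d = T.toFinset.card := by
    rw [hd, ← PH.filter_card T hu]
    congr!
  rw [hdcard]
  exact Nat.descFactorial_eq_div
    ((Finset.card_le_univ _).trans (le_of_eq (Finset.card_univ)))
end
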